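/- Let X be a real m×n matrix and Z a real n×n matrix such that X = XZ and ‖Z‖_* = rank(X). Then Z = SIM(X). -/

import Mathlib

open Matrix

/-- The nuclear norm of a real matrix: the sum of its singular values
(the square roots of the eigenvalues of `Aᵀ * A`). -/
noncomputable def nuclearNorm {m n : Type*} [Fintype m] [Fintype n] [DecidableEq n]
    (A : Matrix m n ℝ) : ℝ :=
  ∑ i, Real.sqrt ((show (Aᵀ * A).IsHermitian by
    rw [← Matrix.conjTranspose_eq_transpose_of_trivial]
    exact Matrix.isHermitian_conjTranspose_mul_self A).eigenvalues i)

/-- The shape interaction matrix of a real `m × n` matrix `X`: the `n × n`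
orthogonal projection matrix onto the row space of `X`. -/
noncomputable def SIM {m n : ℕ} (X : Matrix (Fin m) (Fin n) ℝ) :
    Matrix (Fin n) (Fin n) ℝ :=
  let U : Submodule ℝ (EuclideanSpace ℝ (Fin n)) :=
    Submodule.span ℝ (Set.range fun i => (WithLp.toLp 2 (X i) : EuclideanSpace ℝ (Fin n)))
  LinearMap.toMatrix'
    ((WithLp.linearEquiv 2 ℝ (Fin n → ℝ)).toLinearMap ∘ₗ
      ((U.subtypeL.comp (U.orthogonalProjectionOnto)).toLinearMap :
        EuclideanSpace ℝ (Fin n) →ₗ[ℝ] EuclideanSpace ℝ (Fin n)) ∘ₗ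
      (WithLp.linearEquiv 2 ℝ (Fin n → ℝ)).symm.toLinearMap :
      (Fin n → ℝ) →ₗ[ℝ] (Fin n → ℝ))

/-!
Since `X = X * Z`, the transpose `Zᵀ` fixes the row space `R` of `X`, so the projection
`P = SIM X` onto `R` satisfies `P * Z = P`, and `‖v‖ = ‖P (Z v)‖ ≤ ‖Z v‖` for `v ∈ R`.
By the min–max principle at least `rank X = dim R` singular values of `Z` are `≥ 1`; as they
sum to `rank X`, each of them is `0` or `1`, so `tr (Zᵀ Z) = rank X = tr P`.
Then `(Z - P)ᵀ (Z - P) = Zᵀ Z - P` has trace zero, hence `Z = P`.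
-/

open Module Submodule Finset
open scoped RealInnerProductSpace

theorem sum_sq_eq_sum_of_sum_le_card_one_le {ι : Type*} [Fintype ι] {s : ι → ℝ}
    (hs : ∀ i, 0 ≤ s i) (h : ∑ i, s i ≤ #{i | 1 ≤ s i}) : ∑ i, s i ^ 2 = ∑ i, s i := by
  have hterm : ∀ i, 0 ≤ s i - if 1 ≤ s i then 1 else 0 := fun i => by
    split_ifs <;> linarith [hs i]
  have hzero : ∑ i, (s i - if 1 ≤ s i then 1 else 0) = 0 := by
    refine le_antisymm ?_ (sum_nonneg fun i _ => hterm i)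
    rw [sum_sub_distrib, sum_boole]
    linarith
  refine sum_congr rfl fun i _ => ?_
  have hi := (sum_eq_zero_iff_of_nonneg fun i _ => hterm i).1 hzero i (mem_univ _)
  split_ifs at hi <;> nlinarith

theorem IsStarProjection.eq_of_mul_eq_self_of_trace_eq {n R : Type*} [Fintype n] [Ring R]
    [PartialOrder R] [StarRing R] [StarOrderedRing R] [NoZeroDivisors R] {P Z : Matrix n n R}
    (hP : IsStarProjection P) (hPZ : P * Z = P) (htr : (Zᴴ * Z).trace = P.trace) : Z = P := by
  have hPh : Pᴴ = P := hP.isSelfAdjoint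
  have hZhP : Zᴴ * P = P := by
    simpa only [conjTranspose_mul, hPh] using congrArg conjTranspose hPZ
  have hexpand : (Z - P)ᴴ * (Z - P) = Zᴴ * Z - P := by
    rw [conjTranspose_sub, hPh, sub_mul, mul_sub, mul_sub, hZhP, hPZ, hP.isIdempotentElem.eq]
    abel
  rw [← sub_eq_zero, ← trace_conjTranspose_mul_self_eq_zero_iff, hexpand, trace_sub, htr, sub_self]

theorem Submodule.norm_le_norm_apply_of_starProjection_comp_eq {E : Type*}
    [NormedAddCommGroup E] [InnerProductSpace ℝ E] {K : Submodule ℝ E} [K.HasOrthogonalProjection]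
    {T : E →L[ℝ] E} (hT : K.starProjection ∘L T = K.starProjection) {v : E} (hv : v ∈ K) :
    ‖v‖ ≤ ‖T v‖ :=
  calc ‖v‖ = ‖K.starProjection (T v)‖ := by
        rw [← ContinuousLinearMap.comp_apply, hT, K.starProjection_eq_self_iff.2 hv]
    _ ≤ ‖T v‖ := K.norm_starProjection_apply_le _

theorem Matrix.IsHermitian.finrank_le_card_le_eigenvalues {n : Type*} [Fintype n] [DecidableEq n]
    {A : Matrix n n ℝ} (hA : A.IsHermitian) {c : ℝ} {W : Submodule ℝ (EuclideanSpace ℝ n)}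
    (hW : ∀ v ∈ W, c * ‖v‖ ^ 2 ≤ ⟪v, toEuclideanCLM (𝕜 := ℝ) A v⟫) :
    finrank ℝ W ≤ #{i | c ≤ hA.eigenvalues i} := by
  set b := hA.eigenvectorBasis
  set μ := hA.eigenvalues
  have hb : Orthonormal ℝ fun i : {i // μ i < c} => b i :=
    b.orthonormal.comp _ Subtype.val_injective
  have hdisj : Disjoint (span ℝ (Set.range fun i : {i // μ i < c} => b i)) W := by
    refine disjoint_def.2 fun v hvS hvW => ?_
    obtain ⟨a, rfl⟩ := (mem_span_range_iff_exists_fun ℝ).1 hvS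
    have hAv : toEuclideanCLM (𝕜 := ℝ) A (∑ i, a i • b i) = ∑ i, (a i * μ i) • b i := by
      simp only [map_sum, map_smul, mul_smul]
      congr! 2 with i
      apply WithLp.ofLp_injective 2
      simpa using hA.mulVec_eigenvectorBasis i
    have hquad := hW _ hvW
    rw [hAv, ← real_inner_self_eq_norm_sq, hb.inner_sum, hb.inner_sum, mul_sum] at hquad
    simp only [conj_trivial] at hquad
    have hterm : ∀ i, 0 ≤ a i ^ 2 * (c - μ i) := fun i =>
      mul_nonneg (sq_nonneg _) (sub_nonneg.2 i.2.le)
    have hsum : ∑ i, a i ^ 2 * (c - μ i) = 0 := by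
      refine le_antisymm ?_ (sum_nonneg fun i _ => hterm i)
      calc ∑ i, a i ^ 2 * (c - μ i) = ∑ i, c * (a i * a i) - ∑ i, a i * (a i * μ i) := by
            rw [← sum_sub_distrib]; congr! 1 with i; ring
        _ ≤ 0 := sub_nonpos.2 hquad
    have ha : ∀ i, a i = 0 := fun i => by
      have := (sum_eq_zero_iff_of_nonneg fun i _ => hterm i).1 hsum i (mem_univ _)
      simpa [(sub_pos.2 i.2).ne'] using this
    simp [ha]
  have hcount := finrank_add_finrank_le_of_disjoint hdisj
  rw [finrank_span_eq_card hb.linearIndependent, finrank_euclideanSpace,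
    Fintype.card_subtype] at hcount
  have hsplit := card_filter_add_card_filter_not (s := univ) (fun i => μ i < c)
  simp only [not_lt, card_univ] at hsplit
  omega

theorem isHermitian_transpose_mul_self {m n : Type*} [Fintype m] (A : Matrix m n ℝ) :
    (Aᵀ * A).IsHermitian := by
  simpa using isHermitian_conjTranspose_mul_self A

/-- Unsorted and indexed by the columns, unlike `LinearMap.singularValues`. -/
noncomputable def singularValues {m n : Type*} [Fintype m] [Fintype n] [DecidableEq n]
    (A : Matrix m n ℝ) (i : n) : ℝ :=
  √((isHermitian_transpose_mul_self A).eigenvalues i)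

section SingularValues

variable {m n : Type*} [Fintype m] [Fintype n] [DecidableEq n]

theorem nuclearNorm_eq_sum_singularValues (A : Matrix m n ℝ) :
    nuclearNorm A = ∑ i, singularValues A i :=
  rfl

theorem singularValues_nonneg (A : Matrix m n ℝ) (i : n) : 0 ≤ singularValues A i :=
  Real.sqrt_nonneg _

theorem trace_transpose_mul_self_eq_sum_sq_singularValues (A : Matrix m n ℝ) :
    (Aᵀ * A).trace = ∑ i, singularValues A i ^ 2 := by
  have hpsd : (Aᵀ * A).PosSemidef := by simpa using posSemidef_conjTranspose_mul_self A
  simp only [singularValues, Real.sq_sqrt (hpsd.eigenvalues_nonneg _)]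
  simpa using (isHermitian_transpose_mul_self A).trace_eq_sum_eigenvalues

theorem finrank_le_card_one_le_singularValues {A : Matrix n n ℝ}
    {W : Submodule ℝ (EuclideanSpace ℝ n)} (hW : ∀ v ∈ W, ‖v‖ ≤ ‖toEuclideanCLM (𝕜 := ℝ) A v‖) :
    finrank ℝ W ≤ #{i | 1 ≤ singularValues A i} := by
  simp only [singularValues, Real.one_le_sqrt]
  refine (isHermitian_transpose_mul_self A).finrank_le_card_le_eigenvalues fun v hv => ?_
  have hAtA : toEuclideanCLM (𝕜 := ℝ) (Aᵀ * A)
      = ContinuousLinearMap.adjoint (toEuclideanCLM (𝕜 := ℝ) A) * toEuclideanCLM (𝕜 := ℝ) A := by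
    rw [map_mul, ← conjTranspose_eq_transpose_of_trivial, ← star_eq_conjTranspose, map_star,
      ContinuousLinearMap.star_eq_adjoint]
  rw [one_mul, hAtA, mul_apply_eq_comp, ContinuousLinearMap.adjoint_inner_right,
    real_inner_self_eq_norm_sq]
  exact pow_le_pow_left₀ (norm_nonneg v) (hW v hv) 2

end SingularValues

noncomputable def rowSpace {m n : ℕ} (X : Matrix (Fin m) (Fin n) ℝ) :
    Submodule ℝ (EuclideanSpace ℝ (Fin n)) :=
  span ℝ (Set.range fun i => (WithLp.toLp 2 (X i) : EuclideanSpace ℝ (Fin n)))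

section SIM

variable {m n : ℕ} (X : Matrix (Fin m) (Fin n) ℝ)

theorem toEuclideanCLM_SIM : toEuclideanCLM (𝕜 := ℝ) (SIM X) = (rowSpace X).starProjection := by
  rw [← StarAlgEquiv.eq_symm_apply]
  rfl

theorem isStarProjection_SIM : IsStarProjection (SIM X) := by
  rw [← (toEuclideanCLM (𝕜 := ℝ) (n := Fin n)).symm_apply_apply (SIM X), toEuclideanCLM_SIM]
  exact isStarProjection_starProjection.map (toEuclideanCLM (𝕜 := ℝ) (n := Fin n)).symm.toStarAlgHom

theorem finrank_rowSpace : finrank ℝ (rowSpace X) = X.rank := by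
  rw [rank_eq_finrank_span_row, rowSpace,
    ← LinearEquiv.finrank_map_eq (WithLp.linearEquiv 2 ℝ (Fin n → ℝ)), map_span, ← Set.range_comp]
  rfl

theorem trace_SIM : (SIM X).trace = X.rank := by
  rw [← finrank_rowSpace, ← Matrix.trace_toLin_eq (SIM X) (PiLp.basisFun 2 ℝ (Fin n))]
  have h : toLin (PiLp.basisFun 2 ℝ (Fin n)) (PiLp.basisFun 2 ℝ (Fin n)) (SIM X)
      = ((rowSpace X).starProjection : EuclideanSpace ℝ (Fin n) →ₗ[ℝ] _) := by
    rw [← toEuclideanCLM_SIM]; rfl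
  have hproj := LinearMap.IsIdempotentElem.isProj_range _
    (ContinuousLinearMap.IsIdempotentElem.toLinearMap (rowSpace X).isIdempotentElem_starProjection)
  rw [h, hproj.trace, range_starProjection]

theorem transpose_mulVec_eq_of_mem_rowSpace {Z : Matrix (Fin n) (Fin n) ℝ} (hXZ : X = X * Z)
    {v : EuclideanSpace ℝ (Fin n)} (hv : v ∈ rowSpace X) :
    toEuclideanCLM (𝕜 := ℝ) Zᵀ v = v := by
  refine span_induction (p := fun v _ => toEuclideanCLM (𝕜 := ℝ) Zᵀ v = v) ?_ (map_zero _)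
    (fun x y _ _ hx hy => by rw [map_add, hx, hy]) (fun a x _ hx => by rw [map_smul, hx]) hv
  rintro _ ⟨i, rfl⟩
  rw [toEuclideanCLM_toLp, mulVec_transpose]
  exact congrArg (WithLp.toLp 2) (congrFun hXZ i).symm

theorem SIM_mul_eq_self_of_eq_mul {Z : Matrix (Fin n) (Fin n) ℝ} (hXZ : X = X * Z) :
    SIM X * Z = SIM X := by
  have hsymm : (SIM X)ᵀ = SIM X := by
    rw [← conjTranspose_eq_transpose_of_trivial]; exact (isStarProjection_SIM X).isSelfAdjoint
  have h : Zᵀ * SIM X = SIM X := by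
    refine EquivLike.injective (toEuclideanCLM (𝕜 := ℝ) (n := Fin n)) ?_
    rw [map_mul, toEuclideanCLM_SIM]
    ext1 v
    rw [mul_apply_eq_comp]
    exact transpose_mulVec_eq_of_mem_rowSpace X hXZ ((rowSpace X).starProjection_apply_mem v)
  simpa only [transpose_mul, hsymm, transpose_transpose] using congrArg transpose h

end SIM

/-- If `X = X * Z` and the nuclear norm of `Z` equals `rank X`, then `Z = SIM X`. -/
theorem eq_sim_of_nuclearNorm_eq_rank {m n : ℕ} (X : Matrix (Fin m) (Fin n) ℝ)
    (Z : Matrix (Fin n) (Fin n) ℝ) (hXZ : X = X * Z)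
    (hnn : nuclearNorm Z = (X.rank : ℝ)) :
    Z = SIM X := by
  have hPZ := SIM_mul_eq_self_of_eq_mul X hXZ
  have hcomp : (rowSpace X).starProjection ∘L toEuclideanCLM (𝕜 := ℝ) Z
      = (rowSpace X).starProjection := by
    rw [← toEuclideanCLM_SIM, ← ContinuousLinearMap.mul_def, ← map_mul, hPZ]
  have hcard : (X.rank : ℝ) ≤ #{i | 1 ≤ singularValues Z i} := by
    rw [← finrank_rowSpace]
    exact_mod_cast finrank_le_card_one_le_singularValues fun v hv =>
      norm_le_norm_apply_of_starProjection_comp_eq hcomp hv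
  have hsq := sum_sq_eq_sum_of_sum_le_card_one_le (singularValues_nonneg Z)
    (by rwa [← nuclearNorm_eq_sum_singularValues, hnn])
  refine (isStarProjection_SIM X).eq_of_mul_eq_self_of_trace_eq hPZ ?_
  rw [conjTranspose_eq_transpose_of_trivial, trace_transpose_mul_self_eq_sum_sq_singularValues, hsq,
    ← nuclearNorm_eq_sum_singularValues, hnn, trace_SIM]
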